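/- arXiv:0710.3470 — 4 statements merged into one kernel-verified Lean document; each statement's English description precedes it below -/
import Mathlib

section
/- Let R be a commutative ring, n ≥ 1, and let g, b be n×n matrices over R with b upper triangular (i.e. b_{ij} = 0 whenever i > j). Then for every k with 1 ≤ k ≤ n and every choice of rows a_1, …, a_k ∈ {1, …, n}, the determinant of the k×k submatrix of the product g·b formed by the rows a_1, …, a_k and the columns 1, …, k equals (b_{11} b_{22} ⋯ b_{kk}) times the determinant of the k×k submatrix of g formed by the same rows a_1, …, a_k and the columns 1, …, k. -/
/-! Since `b` is upper triangular, the first `k` columns of `g * b` only involve the first `k`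
columns of `g`: the minor factors as `g.submatrix a (first k) * b.submatrix (first k) (first k)`,
and the second factor is upper triangular with determinant `b₁₁ ⋯ b_kk`. -/

namespace Matrix

theorem IsUpperTriangular.submatrix_of_strictMono {m n R : Type*} [Zero R] [Preorder m]
    [Preorder n] {M : Matrix m m R} (hM : M.IsUpperTriangular) {f : n → m} (hf : StrictMono f) :
    (M.submatrix f f).IsUpperTriangular :=
  fun _ _ hij => hM (hf hij)

theorem mul_submatrix_castLE_of_isUpperTriangular {l ι α : Type*} [NonUnitalNonAssocSemiring α]
    {n k : ℕ} (g : Matrix l (Fin n) α) {b : Matrix (Fin n) (Fin n) α} (hb : b.IsUpperTriangular)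
    (a : ι → l) (hkn : k ≤ n) :
    (g * b).submatrix a (Fin.castLE hkn)
      = g.submatrix a (Fin.castLE hkn) * b.submatrix (Fin.castLE hkn) (Fin.castLE hkn) := by
  ext i j
  refine (Fintype.sum_of_injective _ (Fin.castLE_injective hkn) _ _ ?_ fun _ => rfl).symm
  rintro m hm
  have hjm : Fin.castLE hkn j < m := by
    rw [Fin.lt_def, Fin.val_castLE]
    by_contra! hmj
    exact hm ⟨⟨m, by omega⟩, rfl⟩
  exact mul_eq_zero_of_right _ (hb hjm)

end Matrix

theorem gaussian_minor_right_upper_triangular_general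
    {R : Type*} [CommRing R] {n : ℕ}
    (g b : Matrix (Fin n) (Fin n) R)
    (hb : ∀ i j : Fin n, j < i → b i j = 0)
    (k : ℕ) (hkn : k ≤ n) (a : Fin k → Fin n) :
    ((g * b).submatrix a (Fin.castLE hkn)).det
      = (∏ j : Fin k, b (Fin.castLE hkn j) (Fin.castLE hkn j))
          * (g.submatrix a (Fin.castLE hkn)).det := by
  have hb : b.IsUpperTriangular := fun i j => hb i j
  rw [Matrix.mul_submatrix_castLE_of_isUpperTriangular g hb, Matrix.det_mul,
    Matrix.det_of_isUpperTriangular (hb.submatrix_of_strictMono (Fin.strictMono_castLE hkn)),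
    mul_comm]
  rfl

/-- For `b` upper triangular, the minor of `g * b` on rows `a₁,…,a_k` and the
first `k` columns equals `b₁₁ ⋯ b_kk` times the corresponding minor of `g`. -/
theorem gaussian_minor_right_upper_triangular
    {R : Type*} [CommRing R] {n : ℕ} (hn : 1 ≤ n)
    (g b : Matrix (Fin n) (Fin n) R)
    (hb : ∀ i j : Fin n, j < i → b i j = 0)
    (k : ℕ) (hk1 : 1 ≤ k) (hkn : k ≤ n) (a : Fin k → Fin n) :
    ((g * b).submatrix a (Fin.castLE hkn)).det
      = (∏ j : Fin k, b (Fin.castLE hkn j) (Fin.castLE hkn j))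
          * (g.submatrix a (Fin.castLE hkn)).det :=
  gaussian_minor_right_upper_triangular_general g b hb k hkn a
end

section
/- Let R be a commutative ring, n ≥ 1, and let b, g be n×n matrices over R with b upper triangular (i.e. b_{ij} = 0 whenever i > j). Then for every k with 1 ≤ k ≤ n, the determinant of the k×k submatrix of the product b·g formed by the rows n−k+1, …, n and the columns 1, …, k equals (b_{n−k+1,n−k+1} b_{n−k+2,n−k+2} ⋯ b_{nn}) times the determinant of the k×k submatrix of g formed by the rows n−k+1, …, n and the columns 1, …, k. -/
/-!
The last `k` rows form an upper set of indices, and row `i` of an upper triangular `b` vanishes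
outside the columns `≥ i`. So the last `k` rows of `b * g` only involve the last `k` rows of `g`,
through the principal corner of `b` on those indices, which is again upper triangular:
the minor of `b * g` is the product of that corner's diagonal with the minor of `g`.
-/

namespace Matrix

variable {ι κ ν R : Type*} [LinearOrder ι] [Fintype ι] [Fintype κ] [CommRing R]
  {b g : Matrix ι ι R} {e : κ → ι}

theorem submatrix_mul_of_isUpperTriangular_of_isUpperSet (hb : b.IsUpperTriangular)
    (he : Function.Injective e) (hup : IsUpperSet (Set.range e)) (c : ν → ι) :
    (b * g).submatrix e c = b.submatrix e e * g.submatrix e c := by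
  ext i j
  refine (Fintype.sum_of_injective e he _ _ (fun l hl => ?_) fun _ => rfl).symm
  have hlt : l < e i := lt_of_not_ge fun hle => hl (hup hle ⟨i, rfl⟩)
  exact mul_eq_zero_of_left (hb hlt) _

theorem det_submatrix_mul_of_isUpperTriangular_of_isUpperSet [LinearOrder κ] [DecidableEq κ]
    (hb : b.IsUpperTriangular) (he : StrictMono e) (hup : IsUpperSet (Set.range e))
    (c : κ → ι) :
    ((b * g).submatrix e c).det = (∏ i, b (e i) (e i)) * (g.submatrix e c).det := by
  have hbe : (b.submatrix e e).IsUpperTriangular := fun _ _ hij => hb (he hij)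
  rw [submatrix_mul_of_isUpperTriangular_of_isUpperSet hb he.injective hup, det_mul,
    det_of_isUpperTriangular hbe]
  rfl

end Matrix

/-- For `b` upper triangular, the minor of `b * g` on the last `k` rows
(rows `n-k+1, …, n`) and the first `k` columns equals
`b_{n-k+1,n-k+1} ⋯ b_{n,n}` times the corresponding minor of `g`. -/
theorem bottom_left_minor_left_upper_triangular
    {R : Type*} [CommRing R] {n : ℕ}
    (b g : Matrix (Fin n) (Fin n) R)
    (hb : ∀ i j : Fin n, j < i → b i j = 0)
    (k : ℕ) (hkn : k ≤ n) :
    ((b * g).submatrix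
        (fun i : Fin k => (⟨n - k + (i : ℕ), by have := i.isLt; omega⟩ : Fin n))
        (Fin.castLE hkn)).det
      = (∏ i : Fin k,
            b ⟨n - k + (i : ℕ), by have := i.isLt; omega⟩
              ⟨n - k + (i : ℕ), by have := i.isLt; omega⟩)
          * ((g.submatrix
                (fun i : Fin k => (⟨n - k + (i : ℕ), by have := i.isLt; omega⟩ : Fin n))
                (Fin.castLE hkn)).det) := by
  refine Matrix.det_submatrix_mul_of_isUpperTriangular_of_isUpperSet (fun i j hij => hb i j hij)
    (fun i j hij => by simp only [Fin.mk_lt_mk]; omega) ?_ _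
  rintro l m hlm ⟨i, rfl⟩
  have hm : n - k ≤ (m : ℕ) := le_trans (Nat.le_add_right _ _) (Fin.le_def.mp hlm)
  exact ⟨⟨m - (n - k), by omega⟩, Fin.ext (by simp only; omega)⟩
end

section
/- Fix integers n ≥ 2 and 1 ≤ r ≤ n−1. Let S be the set of pairs (i,j) with 1 ≤ i,j ≤ n such that either (i ≤ r and r+1−i < j ≤ r) or (i > r and j ≤ r) or (i > r and j > n+r+1−i). Let R be the multivariate polynomial ring over a field K (or over ℤ) with one indeterminate x_{ij} for each (i,j) ∈ S, and let M be the n×n matrix over R with M_{ij} = x_{ij} if (i,j) ∈ S, M_{ij} = 1 if (i ≤ r and j = r+1−i) or (i > r and j = n+r+1−i), and M_{ij} = 0 otherwise. For 1 ≤ k ≤ n−1 let D_k = det of the k×k submatrix of M formed by rows n−k+1,…,n and columns 1,…,k, and let m = min(k, r, n−k, n−r). Then D_k is nonzero, every monomial occurring in D_k has total degree at least m, and D_k has a monomial of total degree exactly m (equivalently, D_k lies in 𝔪^m but not in 𝔪^{m+1}, where 𝔪 is the ideal of R generated by all the indeterminates x_{ij}). -/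
/-!
Expanding `D` along permutations, each term takes one entry from every column. The `m` columns
`q` with `k + r - n ≤ q < min k r` contain no `1` of `M`, so every term has at least `m`
indeterminate factors and `D ∈ 𝔪 ^ m`. Conversely, send the indeterminates at the positions
`(n - k + q, q)` of those columns to `X` and all others to `0`. The minor becomes the diagonal
matrix with `X` on these columns and `1` elsewhere, composed with the permutation that reverses
`[0, k + r - n)` and `[min k r, k)` and fixes the window, so `D` maps to `± X ^ m`, which is
nonzero and not divisible by `X ^ (m + 1)`.
-/

open Finset Polynomial

theorem Matrix.det_mem_pow_card_of_mem_cols {R ι : Type*} [CommRing R] [Fintype ι]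
    [DecidableEq ι] (A : Matrix ι ι R) (I : Ideal R) (s : Finset ι)
    (hs : ∀ i, ∀ j ∈ s, A i j ∈ I) : A.det ∈ I ^ #s := by
  rw [Matrix.det_apply]
  refine Ideal.sum_mem _ fun σ _ => Submodule.smul_of_tower_mem _ _ ?_
  rw [← prod_mul_prod_compl s]
  refine Ideal.mul_mem_right _ _ ?_
  simpa using Ideal.prod_mem_prod fun j hj => hs (σ j) j hj

theorem notMem_pow_succ_of_associated_X_pow {R K : Type*} [CommRing R] [CommRing K] [IsDomain K]
    (φ : R →+* K[X]) {I : Ideal R} (hI : I.map φ ≤ Ideal.span {X}) {x : R} {m : ℕ}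
    (hx : Associated (φ x) (X ^ m)) : x ∉ I ^ (m + 1) := by
  intro hmem
  have hφx : φ x ∈ Ideal.span {X} ^ (m + 1) :=
    Ideal.pow_right_mono hI _ (Ideal.map_pow φ I _ ▸ Ideal.mem_map_of_mem φ hmem)
  rw [Ideal.span_singleton_pow, Ideal.mem_span_singleton, hx.dvd_iff_dvd_right,
    pow_dvd_pow_iff X_ne_zero not_isUnit_X] at hφx
  omega

noncomputable def evalXIndicator {σ : Type*} (K : Type*) [CommRing K] (T : Set σ) :
    MvPolynomial σ K →+* K[X] :=
  MvPolynomial.eval₂Hom C (T.indicator fun _ => X)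

theorem map_span_range_X_le_evalXIndicator {σ K : Type*} [CommRing K] (T : Set σ) :
    (Ideal.span (Set.range MvPolynomial.X)).map (evalXIndicator K T) ≤ Ideal.span {X} := by
  rw [Ideal.map_span, Ideal.span_le]
  rintro _ ⟨_, ⟨v, rfl⟩, rfl⟩
  by_cases hv : v ∈ T <;> simp [evalXIndicator, hv]

def blockRev (a b k t : ℕ) : ℕ :=
  if t < a then a - 1 - t else if t < b then t else b + k - 1 - t

section blockRev

variable {a b k t : ℕ}

theorem blockRev_of_mem (ha : a ≤ t) (hb : t < b) : blockRev a b k t = t := by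
  simp [blockRev, hb, not_lt.2 ha]

theorem blockRev_lt (hak : a ≤ k) (ht : t < k) : blockRev a b k t < k := by
  unfold blockRev; split_ifs <;> omega

theorem blockRev_blockRev (hab : a ≤ b) (ht : t < k) : blockRev a b k (blockRev a b k t) = t := by
  unfold blockRev; split_ifs <;> omega

def blockRevPerm (a b k : ℕ) (hab : a ≤ b) (hak : a ≤ k) : Equiv.Perm (Fin k) :=
  Function.Involutive.toPerm (fun t => ⟨blockRev a b k t, blockRev_lt hak t.2⟩)
    fun t => Fin.ext (blockRev_blockRev hab t.2)

theorem eq_blockRevPerm_iff (hab : a ≤ b) (hak : a ≤ k) {p q : Fin k} :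
    p = blockRevPerm a b k hab hak q ↔ blockRev a b k p = q := by
  constructor
  · rintro rfl
    exact blockRev_blockRev hab q.2
  · intro h
    refine Fin.ext ?_
    change (p : ℕ) = blockRev a b k q
    rw [← h, blockRev_blockRev hab p.2]

end blockRev

def window (k a b : ℕ) : Finset (Fin k) := {p | a ≤ (p : ℕ) ∧ (p : ℕ) < b}

theorem mem_window {k a b : ℕ} {p : Fin k} :
    p ∈ window k a b ↔ a ≤ (p : ℕ) ∧ (p : ℕ) < b := by
  simp [window]

theorem card_window {k a b : ℕ} (hbk : b ≤ k) : #(window k a b) = b - a := by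
  rw [← Nat.card_Ico, ← card_attachFin (Ico a b) fun t ht => (mem_Ico.1 ht).2.trans_le hbk]
  congr 1; ext p; simp [mem_window]

-- The conditions of `hS` and `hM1` in the main theorem, at 0-indexed positions `(i, j)`.
def IsVarPos (n r i j : ℕ) : Prop :=
  (i + 1 ≤ r ∧ r + 1 - (i + 1) < j + 1 ∧ j + 1 ≤ r) ∨ (r < i + 1 ∧ j + 1 ≤ r) ∨
    (r < i + 1 ∧ n + r + 1 - (i + 1) < j + 1)

def IsOnePos (n r i j : ℕ) : Prop :=
  (i + 1 ≤ r ∧ j + 1 = r + 1 - (i + 1)) ∨ (r < i + 1 ∧ j + 1 = n + r + 1 - (i + 1))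

section geometry

variable {n r k i j p q : ℕ}

theorem not_isOnePos_of_isVarPos (hi : i < n) (h : IsVarPos n r i j) : ¬ IsOnePos n r i j := by
  unfold IsVarPos at h; unfold IsOnePos; omega

theorem isVarPos_diag (hp : k + r - n ≤ p) (hp' : p < min k r) : IsVarPos n r (n - k + p) p := by
  unfold IsVarPos; omega

theorem isOnePos_iff (hkn : k ≤ n) (hp : p < k) (hq : q < k) :
    IsOnePos n r (n - k + p) q ↔
      blockRev (k + r - n) (min k r) k p = q ∧ ¬ (k + r - n ≤ p ∧ p < min k r) := by
  unfold IsOnePos blockRev; split_ifs <;> omega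

theorem not_isOnePos_of_mem_window (hp : p < k) (hq : k + r - n ≤ q)
    (hq' : q < min k r) : ¬ IsOnePos n r (n - k + p) q := by
  unfold IsOnePos; omega

end geometry

section minor

variable {K : Type*} [CommRing K] {n r k : ℕ} {S : Fin n → Fin n → Prop}
  {M : Matrix (Fin n) (Fin n) (MvPolynomial {p : Fin n × Fin n // S p.1 p.2} K)}
  {ρ γ : Fin k → Fin n}

theorem submatrix_mem_span_X_of_mem_window
    (hMX : ∀ (i j : Fin n) (h : S i j), M i j = MvPolynomial.X ⟨(i, j), h⟩)
    (hM0 : ∀ i j : Fin n, ¬ S i j → ¬ IsOnePos n r i j → M i j = 0)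
    (hρ : ∀ p, (ρ p : ℕ) = n - k + p) (hγ : ∀ q, (γ q : ℕ) = q)
    (p : Fin k) {q : Fin k} (hq : q ∈ window k (k + r - n) (min k r)) :
    M.submatrix ρ γ p q ∈ Ideal.span (Set.range MvPolynomial.X) := by
  rw [Matrix.submatrix_apply]
  by_cases hvar : S (ρ p) (γ q)
  · rw [hMX _ _ hvar]
    exact Ideal.subset_span ⟨_, rfl⟩
  · have hone : ¬ IsOnePos n r (ρ p) (γ q) := by
      rw [hρ, hγ]
      exact not_isOnePos_of_mem_window p.2 (mem_window.1 hq).1 (mem_window.1 hq).2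
    rw [hM0 _ _ hvar hone]
    exact Ideal.zero_mem _

theorem evalXIndicator_minor_entry (hS : ∀ i j : Fin n, S i j ↔ IsVarPos n r i j)
    (hMX : ∀ (i j : Fin n) (h : S i j), M i j = MvPolynomial.X ⟨(i, j), h⟩)
    (hM1 : ∀ i j : Fin n, IsOnePos n r i j → M i j = 1)
    (hM0 : ∀ i j : Fin n, ¬ S i j → ¬ IsOnePos n r i j → M i j = 0)
    (hkn : k ≤ n) (hρ : ∀ p, (ρ p : ℕ) = n - k + p) (hγ : ∀ q, (γ q : ℕ) = q)
    (p q : Fin k) :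
    evalXIndicator K {v | ∃ p ∈ window k (k + r - n) (min k r), v.1 = (ρ p, γ p)}
        (M (ρ p) (γ q)) =
      if blockRev (k + r - n) (min k r) k p = q then
        (if p ∈ window k (k + r - n) (min k r) then X else 1) else 0 := by
  set W := window k (k + r - n) (min k r)
  set T : Set {v : Fin n × Fin n // S v.1 v.2} := {v | ∃ p ∈ W, v.1 = (ρ p, γ p)}
  have hρ_inj : ρ.Injective := fun p p' h => Fin.ext (by
    have := congrArg Fin.val h; rw [hρ, hρ] at this; omega)
  have hγ_inj : γ.Injective := fun q q' h => Fin.ext (by simpa [hγ] using congrArg Fin.val h)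
  have hfix : p ∈ W → blockRev (k + r - n) (min k r) k p = p := fun hp =>
    blockRev_of_mem (mem_window.1 hp).1 (mem_window.1 hp).2
  have hone : IsOnePos n r (ρ p) (γ q) ↔
      blockRev (k + r - n) (min k r) k p = q ∧ p ∉ W := by
    rw [hρ, hγ, mem_window]; exact isOnePos_iff hkn p.2 q.2
  by_cases hvar : S (ρ p) (γ q)
  · rw [hMX _ _ hvar, evalXIndicator, MvPolynomial.eval₂Hom_X']
    by_cases hdiag : p = q ∧ p ∈ W
    · obtain ⟨rfl, hp⟩ := hdiag
      rw [Set.indicator_of_mem (s := T) ⟨p, hp, rfl⟩, if_pos (hfix hp), if_pos hp]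
    · rw [Set.indicator_of_notMem, if_neg]
      · intro hpq
        by_cases hp : p ∈ W
        · exact hdiag ⟨Fin.ext (hfix hp ▸ hpq), hp⟩
        · exact not_isOnePos_of_isVarPos (ρ p).2 ((hS _ _).1 hvar) (hone.2 ⟨hpq, hp⟩)
      · rintro ⟨p', hp', hv⟩
        obtain ⟨hp, hq⟩ := Prod.ext_iff.1 hv
        exact hdiag ⟨(hρ_inj hp).trans (hγ_inj hq).symm, hρ_inj hp ▸ hp'⟩
  by_cases h1 : IsOnePos n r (ρ p) (γ q)
  · rw [hM1 _ _ h1, map_one, if_pos (hone.1 h1).1, if_neg (hone.1 h1).2]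
  · rw [hM0 _ _ hvar h1, map_zero, if_neg]
    intro hpq
    by_cases hp : p ∈ W
    · obtain rfl : p = q := Fin.ext (hfix hp ▸ hpq)
      refine hvar ((hS _ _).2 ?_)
      rw [hρ, hγ]
      exact isVarPos_diag (mem_window.1 hp).1 (mem_window.1 hp).2
    · exact h1 (hone.2 ⟨hpq, hp⟩)

theorem submatrix_map_evalXIndicator (hS : ∀ i j : Fin n, S i j ↔ IsVarPos n r i j)
    (hMX : ∀ (i j : Fin n) (h : S i j), M i j = MvPolynomial.X ⟨(i, j), h⟩)
    (hM1 : ∀ i j : Fin n, IsOnePos n r i j → M i j = 1)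
    (hM0 : ∀ i j : Fin n, ¬ S i j → ¬ IsOnePos n r i j → M i j = 0)
    (hrn : r ≤ n) (hkn : k ≤ n) (hρ : ∀ p, (ρ p : ℕ) = n - k + p)
    (hγ : ∀ q, (γ q : ℕ) = q) :
    (M.submatrix ρ γ).map (evalXIndicator K
        {v | ∃ p ∈ window k (k + r - n) (min k r), v.1 = (ρ p, γ p)}) =
      (Matrix.diagonal fun p => if p ∈ window k (k + r - n) (min k r) then X else 1).submatrix
        id (blockRevPerm (k + r - n) (min k r) k (by omega) (by omega)) := by
  refine Matrix.ext fun p q => ?_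
  simp only [Matrix.map_apply, Matrix.submatrix_apply, Matrix.diagonal_apply, id,
    evalXIndicator_minor_entry hS hMX hM1 hM0 hkn hρ hγ, eq_blockRevPerm_iff]

theorem evalXIndicator_det_submatrix_associated (hS : ∀ i j : Fin n, S i j ↔ IsVarPos n r i j)
    (hMX : ∀ (i j : Fin n) (h : S i j), M i j = MvPolynomial.X ⟨(i, j), h⟩)
    (hM1 : ∀ i j : Fin n, IsOnePos n r i j → M i j = 1)
    (hM0 : ∀ i j : Fin n, ¬ S i j → ¬ IsOnePos n r i j → M i j = 0)
    (hrn : r ≤ n) (hkn : k ≤ n) (hρ : ∀ p, (ρ p : ℕ) = n - k + p)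
    (hγ : ∀ q, (γ q : ℕ) = q) :
    Associated
      (evalXIndicator K {v | ∃ p ∈ window k (k + r - n) (min k r), v.1 = (ρ p, γ p)}
        (M.submatrix ρ γ).det)
      (X ^ #(window k (k + r - n) (min k r))) := by
  rw [RingHom.map_det, RingHom.mapMatrix_apply,
    submatrix_map_evalXIndicator hS hMX hM1 hM0 hrn hkn hρ hγ, Matrix.det_permute',
    Matrix.det_diagonal, prod_ite_mem, univ_inter, prod_const]
  exact associated_unit_mul_left _ _ ((Equiv.Perm.sign _).isUnit.map (Int.castRingHom _))

end minor

/-- Let `M` be the generic matrix of the affine patch `w₀^P B⁻ B` of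
`SL_n/B` (ones on the two shifted anti-diagonals, independent indeterminates `x_{ij}`
at the positions of `S`, zeros elsewhere).  For `1 ≤ k ≤ n - 1`, the bottom-left
`k × k` minor `D_k` of `M` is nonzero, lies in `𝔪^m`, and does not lie in `𝔪^{m+1}`,
where `m = min(k, r, n-k, n-r)` and `𝔪` is the ideal generated by the indeterminates.
(Indices `i, j` of `Fin n` are translated to the 1-indexed `i+1, j+1` of the paper.) -/
theorem bottom_left_minor_order_of_vanishing
    {K : Type*} [Field K] (n r : ℕ) (hr2 : r ≤ n - 1)
    (S : Fin n → Fin n → Prop)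
    (hS : ∀ i j : Fin n, S i j ↔
      (((i : ℕ) + 1 ≤ r ∧ r + 1 - ((i : ℕ) + 1) < (j : ℕ) + 1 ∧ (j : ℕ) + 1 ≤ r) ∨
       (r < (i : ℕ) + 1 ∧ (j : ℕ) + 1 ≤ r) ∨
       (r < (i : ℕ) + 1 ∧ n + r + 1 - ((i : ℕ) + 1) < (j : ℕ) + 1)))
    (M : Matrix (Fin n) (Fin n) (MvPolynomial {p : Fin n × Fin n // S p.1 p.2} K))
    (hMX : ∀ (i j : Fin n) (h : S i j), M i j = MvPolynomial.X ⟨(i, j), h⟩)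
    (hM1 : ∀ i j : Fin n,
      (((i : ℕ) + 1 ≤ r ∧ (j : ℕ) + 1 = r + 1 - ((i : ℕ) + 1)) ∨
       (r < (i : ℕ) + 1 ∧ (j : ℕ) + 1 = n + r + 1 - ((i : ℕ) + 1))) → M i j = 1)
    (hM0 : ∀ i j : Fin n, ¬ S i j →
      ¬ (((i : ℕ) + 1 ≤ r ∧ (j : ℕ) + 1 = r + 1 - ((i : ℕ) + 1)) ∨
         (r < (i : ℕ) + 1 ∧ (j : ℕ) + 1 = n + r + 1 - ((i : ℕ) + 1))) → M i j = 0)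
    (k : ℕ) (hk2 : k ≤ n - 1)
    (D : MvPolynomial {p : Fin n × Fin n // S p.1 p.2} K)
    (hD : D = (M.submatrix
        (fun i : Fin k => (⟨n - k + (i : ℕ), by have := i.isLt; omega⟩ : Fin n))
        (Fin.castLE (by omega))).det)
    (m : ℕ) (hm : m = min (min k r) (min (n - k) (n - r)))
    (𝔪 : Ideal (MvPolynomial {p : Fin n × Fin n // S p.1 p.2} K))
    (h𝔪 : 𝔪 = Ideal.span (Set.range MvPolynomial.X)) :
    D ≠ 0 ∧ D ∈ 𝔪 ^ m ∧ D ∉ 𝔪 ^ (m + 1) := by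
  subst hD hm h𝔪
  have hkn : k ≤ n := by omega
  have hrn : r ≤ n := by omega
  rw [show min (min k r) (min (n - k) (n - r)) = #(window k (k + r - n) (min k r)) by
    rw [card_window (min_le_left k r)]; omega]
  have hassoc := evalXIndicator_det_submatrix_associated (K := K) hS hMX hM1 hM0 hrn hkn
    (ρ := fun i : Fin k => ⟨n - k + i, by omega⟩) (γ := Fin.castLE hkn) (fun _ => rfl)
    (fun _ => rfl)
  refine ⟨fun h0 => ?_, Matrix.det_mem_pow_card_of_mem_cols _ _ _ fun p _ hq =>
      submatrix_mem_span_X_of_mem_window (k := k) hMX hM0 (fun _ => rfl) (fun _ => rfl) p hq,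
    notMem_pow_succ_of_associated_X_pow _ (map_span_range_X_le_evalXIndicator _) hassoc⟩
  rw [h0, map_zero] at hassoc
  exact pow_ne_zero _ X_ne_zero (zero_dvd_iff.1 hassoc.dvd)
end

section
/- Fix integers n ≥ 2 and 1 ≤ r ≤ n−1. Let S be the set of pairs (i,j) with 1 ≤ i,j ≤ n such that either (i ≤ r and r+1−i < j ≤ r) or (i > r and j ≤ r) or (i > r and j > n+r+1−i). Let R be the multivariate polynomial ring over a field K with one indeterminate x_{ij} for each (i,j) ∈ S, and let M be the n×n matrix over R with M_{ij} = x_{ij} if (i,j) ∈ S, M_{ij} = 1 if (i ≤ r and j = r+1−i) or (i > r and j = n+r+1−i), and M_{ij} = 0 otherwise. Let Q = ∏_{k=1}^{n−1} D_k, where D_k is the determinant of the k×k submatrix of M formed by rows n−k+1,…,n and columns 1,…,k. Then Q is nonzero, lies in 𝔪^{r(n−r)}, and does not lie in 𝔪^{r(n−r)+1}, where 𝔪 is the ideal of R generated by all the indeterminates x_{ij}. -/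
/-!
Over a domain, a product of polynomials vanishing to orders `a` and `b` at the origin vanishes
to order exactly `a + b`: for `p ∈ 𝔪 ^ a` the class of `p` modulo `𝔪 ^ (a + 1)` is its homogeneous
component of degree `a`, and these components multiply. So it suffices to show that the minor
`D k` vanishes to order exactly `m k = min k r - (k + r - n)`, and `∑ m k = r (n - r)` by counting
the pairs `(a, b) ∈ [0, r) × [0, n - r)` according to `a + b + 1`.

In the `k`-th bottom-left minor the `1`s of `M` fill exactly the columns outside
`[k + r - n, r)`, so each term of the Leibniz expansion has at least `m k` factors in `𝔪`.
Sending every variable off the diagonal of those `m k` columns to zero maps `𝔪` into `𝔪` and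
turns the minor into a monomial matrix, whose determinant is `±` a product of `m k` distinct
variables; hence `D k ∉ 𝔪 ^ (m k + 1)`.
-/

open Finset

namespace MvPolynomial

variable {σ τ R : Type*}

section CommSemiring

variable [CommSemiring R]

def VanishesToOrder (p : MvPolynomial σ R) (a : ℕ) : Prop :=
  p ∈ idealOfVars σ R ^ a ∧ p ∉ idealOfVars σ R ^ (a + 1)

theorem VanishesToOrder.ne_zero {p : MvPolynomial σ R} {a : ℕ} (hp : p.VanishesToOrder a) :
    p ≠ 0 := by
  rintro rfl
  exact hp.2 (zero_mem _)

theorem homogeneousComponent_eq_zero_iff_mem_pow_succ {p : MvPolynomial σ R} {a : ℕ}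
    (hp : p ∈ idealOfVars σ R ^ a) :
    homogeneousComponent a p = 0 ↔ p ∈ idealOfVars σ R ^ (a + 1) := by
  rw [mem_pow_idealOfVars_iff'] at hp ⊢
  rw [MvPolynomial.ext_iff]
  simp only [coeff_homogeneousComponent, coeff_zero, ite_eq_right_iff]
  refine ⟨fun h x hx => ?_, fun h x hx => h x (by omega)⟩
  rcases Nat.lt_succ_iff_lt_or_eq.mp hx with hx | hx
  · exact hp x hx
  · exact h x hx

theorem vanishesToOrder_iff {p : MvPolynomial σ R} {a : ℕ} :
    p.VanishesToOrder a ↔ p ∈ idealOfVars σ R ^ a ∧ homogeneousComponent a p ≠ 0 := by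
  refine and_congr_right fun hp => ?_
  rw [Ne, homogeneousComponent_eq_zero_iff_mem_pow_succ hp]

theorem IsHomogeneous.vanishesToOrder {p : MvPolynomial σ R} {a : ℕ} (h : p.IsHomogeneous a)
    (hp : p ≠ 0) : p.VanishesToOrder a := by
  have hmem : p ∈ idealOfVars σ R ^ a :=
    (mem_pow_idealOfVars_iff a p).mpr fun x hx => by
      rw [Finsupp.degree_eq_weight_one]; exact (h (mem_support_iff.mp hx)).ge
  rw [vanishesToOrder_iff, homogeneousComponent_eq_self h]
  exact ⟨hmem, hp⟩

theorem homogeneousComponent_mul_of_mem_pow {p q : MvPolynomial σ R} {a b : ℕ}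
    (hp : p ∈ idealOfVars σ R ^ a) (hq : q ∈ idealOfVars σ R ^ b) :
    homogeneousComponent (a + b) (p * q) = homogeneousComponent a p * homogeneousComponent b q := by
  classical
  rw [mem_pow_idealOfVars_iff'] at hp hq
  ext d
  rw [coeff_homogeneousComponent, coeff_mul, coeff_mul]
  split_ifs with hd
  · refine sum_congr rfl fun x hx => ?_
    rw [HasAntidiagonal.mem_antidiagonal] at hx
    have hdeg : x.1.degree + x.2.degree = a + b := by rw [← map_add, hx, hd]
    simp only [coeff_homogeneousComponent]
    by_cases h1 : x.1.degree < a
    · simp [hp _ h1]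
    by_cases h2 : x.2.degree < b
    · simp [hq _ h2]
    rw [if_pos (by omega), if_pos (by omega)]
  · refine (sum_eq_zero fun x hx => ?_).symm
    rw [HasAntidiagonal.mem_antidiagonal] at hx
    simp only [coeff_homogeneousComponent]
    split_ifs with h1 h2
    · exact absurd (by rw [← hx, map_add, h1, h2]) hd
    all_goals simp

end CommSemiring

section CommRing

variable [CommRing R] [IsDomain R]

theorem VanishesToOrder.mul {p q : MvPolynomial σ R} {a b : ℕ} (hp : p.VanishesToOrder a)
    (hq : q.VanishesToOrder b) : (p * q).VanishesToOrder (a + b) := by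
  rw [vanishesToOrder_iff] at hp hq ⊢
  refine ⟨pow_add (idealOfVars σ R) a b ▸ Ideal.mul_mem_mul hp.1 hq.1, ?_⟩
  rw [homogeneousComponent_mul_of_mem_pow hp.1 hq.1]
  exact mul_ne_zero hp.2 hq.2

theorem VanishesToOrder.prod {ι : Type*} {s : Finset ι} {f : ι → MvPolynomial σ R} {a : ι → ℕ}
    (h : ∀ i ∈ s, (f i).VanishesToOrder (a i)) :
    (∏ i ∈ s, f i).VanishesToOrder (∑ i ∈ s, a i) := by
  classical
  induction s using Finset.induction_on with
  | empty =>
    simpa using (isHomogeneous_one σ R).vanishesToOrder one_ne_zero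
  | insert i s hi ih =>
    rw [prod_insert hi, sum_insert hi]
    exact (h i (mem_insert_self i s)).mul (ih fun j hj => h j (mem_insert_of_mem hj))

theorem vanishesToOrder_X (v : σ) : (X v : MvPolynomial σ R).VanishesToOrder 1 :=
  (isHomogeneous_X R v).vanishesToOrder (X_ne_zero v)

end CommRing

theorem aeval_mem_pow_idealOfVars [CommSemiring R] {f : σ → MvPolynomial τ R}
    (hf : ∀ v, f v ∈ idealOfVars τ R) {p : MvPolynomial σ R} {c : ℕ}
    (hp : p ∈ idealOfVars σ R ^ c) : aeval f p ∈ idealOfVars τ R ^ c := by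
  have hmap : (idealOfVars σ R).map (aeval f) ≤ idealOfVars τ R := by
    rw [Ideal.map_le_iff_le_comap, idealOfVars, Ideal.span_le]
    rintro _ ⟨v, rfl⟩
    simpa using hf v
  have := Ideal.mem_map_of_mem (aeval f) hp
  rw [Ideal.map_pow] at this
  exact Ideal.pow_right_mono hmap c this

end MvPolynomial

namespace Matrix

variable {ι R : Type*} [Fintype ι] [DecidableEq ι] [CommRing R]

theorem det_mem_pow_card (I : Ideal R) (N : Matrix ι ι R) (C : Finset ι)
    (h : ∀ i, ∀ j ∈ C, N i j ∈ I) : N.det ∈ I ^ #C := by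
  rw [det_apply']
  refine Ideal.sum_mem _ fun τ _ => Ideal.mul_mem_left _ _ ?_
  rw [← prod_mul_prod_compl C]
  refine Ideal.mul_mem_right _ _ ?_
  simpa [prod_const] using Ideal.prod_mem_prod (I := fun _ => I) fun j hj => h (τ j) j hj

theorem det_eq_sign_mul_prod_of_eq_ite (N : Matrix ι ι R) (τ : Equiv.Perm ι) (e : ι → R)
    (h : ∀ i j, N i j = if τ i = j then e j else 0) :
    N.det = Equiv.Perm.sign τ * ∏ i, e i := by
  have hN : N = (diagonal e).submatrix τ id := by
    ext i j
    rw [h, submatrix_apply, id, diagonal_apply]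
    split_ifs with hij <;> simp [hij]
  rw [hN, det_permute, det_diagonal]

end Matrix

-- The patterns of `1`s and of variables of `M`, `1`-indexed as in the hypotheses on `M`.
def IsOnePosition (n r : ℕ) (i j : Fin n) : Prop :=
  ((i : ℕ) + 1 ≤ r ∧ (j : ℕ) + 1 = r + 1 - ((i : ℕ) + 1)) ∨
    (r < (i : ℕ) + 1 ∧ (j : ℕ) + 1 = n + r + 1 - ((i : ℕ) + 1))

def IsVariablePosition (n r : ℕ) (i j : Fin n) : Prop :=
  ((i : ℕ) + 1 ≤ r ∧ r + 1 - ((i : ℕ) + 1) < (j : ℕ) + 1 ∧ (j : ℕ) + 1 ≤ r) ∨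
    (r < (i : ℕ) + 1 ∧ (j : ℕ) + 1 ≤ r) ∨
    (r < (i : ℕ) + 1 ∧ n + r + 1 - ((i : ℕ) + 1) < (j : ℕ) + 1)

def bottomLeftSubmatrix {R : Type*} {n : ℕ} (M : Matrix (Fin n) (Fin n) R) (k : ℕ) (hk : k ≤ n) :
    Matrix (Fin k) (Fin k) R :=
  M.submatrix (fun i : Fin k => (⟨n - k + (i : ℕ), by omega⟩ : Fin n)) (Fin.castLE hk)

/-- The columns of the `k`-th bottom-left minor that contain no `1` of `M`. -/
def minorColumns (n r k : ℕ) : Finset (Fin k) :=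
  {ℓ | k + r - n ≤ (ℓ : ℕ) ∧ (ℓ : ℕ) < r}

def minorOrder (n r k : ℕ) : ℕ := min k r - (k + r - n)

theorem card_minorColumns (n r k : ℕ) : #(minorColumns n r k) = minorOrder n r k := by
  rw [minorOrder, ← Nat.card_Ico]
  refine card_bij (fun ℓ _ => (ℓ : ℕ)) (fun ℓ hℓ => ?_) (fun _ _ _ _ h => Fin.ext h)
    fun x hx => ?_
  · simp only [minorColumns, mem_filter, mem_univ, true_and] at hℓ
    simp only [mem_Ico]
    omega
  · simp only [mem_Ico] at hx
    exact ⟨⟨x, by omega⟩, by simp only [minorColumns, mem_filter, mem_univ, true_and]; omega, rfl⟩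

theorem sum_minorOrder (n r : ℕ) : ∑ k ∈ Icc 1 (n - 1), minorOrder n r k = r * (n - r) := by
  have hfib : ∀ k ∈ Icc 1 (n - 1),
      minorOrder n r k = #{p ∈ range r ×ˢ range (n - r) | p.1 + p.2 + 1 = k} := by
    intro k hk
    rw [mem_Icc] at hk
    rw [minorOrder, ← Nat.card_Ico]
    refine (card_bij (fun p _ => p.1) (fun p hp => ?_) (fun p hp q hq hpq => ?_)
      fun x hx => ⟨(x, k - 1 - x), ?_, rfl⟩).symm
    · simp only [mem_filter, mem_product, mem_range] at hp
      simp only [mem_Ico]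
      omega
    · simp only [mem_filter, mem_product, mem_range] at hp hq
      exact Prod.ext hpq (by omega)
    · simp only [mem_Ico] at hx
      simp only [mem_filter, mem_product, mem_range]
      omega
  rw [sum_congr rfl hfib, ← card_eq_sum_card_fiberwise fun p hp => ?_, card_product, card_range,
    card_range]
  simp only [coe_product, coe_range, Set.mem_prod, Set.mem_Iio, coe_Icc, Set.mem_Icc] at hp ⊢
  omega

theorem bottomLeftSubmatrix_det_mem_pow {R : Type*} [CommRing R] (I : Ideal R) {n r k : ℕ}
    (hk : k ≤ n) {M : Matrix (Fin n) (Fin n) R} (hM : ∀ i j, ¬ IsOnePosition n r i j → M i j ∈ I) :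
    (bottomLeftSubmatrix M k hk).det ∈ I ^ minorOrder n r k := by
  rw [← card_minorColumns]
  refine Matrix.det_mem_pow_card I _ _ fun ℓ ℓ' hℓ' => hM _ _ ?_
  simp only [minorColumns, mem_filter, mem_univ, true_and] at hℓ'
  simp only [IsOnePosition, Fin.val_castLE]
  omega

/-- Row `ℓ` of the `k`-th minor has its `1` in column `k + r - n - 1 - ℓ` if `ℓ < k + r - n` and
in column `r + k - 1 - ℓ` if `r ≤ ℓ`; the remaining rows are matched with the diagonal. -/
def minorPerm {n r k : ℕ} (hr : r ≤ n) (hk : k ≤ n) : Equiv.Perm (Fin k) :=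
  Function.Involutive.toPerm
    (fun ℓ => ⟨if (ℓ : ℕ) < k + r - n then k + r - n - 1 - ℓ
      else if (ℓ : ℕ) < r then ℓ else r + k - 1 - ℓ, by split_ifs <;> omega⟩)
    fun ℓ => by ext; simp only; split_ifs <;> omega

theorem minorPerm_apply_eq_iff {n r k : ℕ} (hr : r ≤ n) (hk : k ≤ n) (ℓ ℓ' : Fin k) :
    minorPerm hr hk ℓ = ℓ' ↔ IsOnePosition n r ⟨n - k + ℓ, by omega⟩ (Fin.castLE hk ℓ') ∨
      (ℓ = ℓ' ∧ ℓ' ∈ minorColumns n r k) := by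
  have := ℓ.isLt
  have := ℓ'.isLt
  have hval : (minorPerm hr hk ℓ : ℕ) = if (ℓ : ℕ) < k + r - n then k + r - n - 1 - ℓ
      else if (ℓ : ℕ) < r then ℓ else r + k - 1 - ℓ := rfl
  simp only [Fin.ext_iff, hval, IsOnePosition, Fin.val_castLE, minorColumns, mem_filter, mem_univ,
    true_and]
  split_ifs <;> omega

noncomputable def specializeToMinorDiagonal {R : Type*} [CommSemiring R] {n : ℕ}
    {S : Fin n → Fin n → Prop} (r k : ℕ) (v : {p : Fin n × Fin n // S p.1 p.2}) :
    MvPolynomial {p : Fin n × Fin n // S p.1 p.2} R :=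
  if (v.1.1 : ℕ) = n - k + v.1.2 ∧ k + r - n ≤ (v.1.2 : ℕ) ∧ (v.1.2 : ℕ) < r then .X v else 0

section Specialization

variable {R : Type*} [CommRing R] {n r k : ℕ} {S : Fin n → Fin n → Prop}

theorem aeval_specializeToMinorDiagonal_bottomLeftSubmatrix (hr : r ≤ n) (hk : k ≤ n)
    (hS : ∀ i j, S i j ↔ IsVariablePosition n r i j)
    {M : Matrix (Fin n) (Fin n) (MvPolynomial {p : Fin n × Fin n // S p.1 p.2} R)}
    (hMX : ∀ i j (h : S i j), M i j = .X ⟨(i, j), h⟩)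
    (hM1 : ∀ i j, IsOnePosition n r i j → M i j = 1)
    (hM0 : ∀ i j, ¬ S i j → ¬ IsOnePosition n r i j → M i j = 0) (ℓ ℓ' : Fin k) :
    MvPolynomial.aeval (specializeToMinorDiagonal r k) (bottomLeftSubmatrix M k hk ℓ ℓ') =
      if minorPerm hr hk ℓ = ℓ' then
        (if ℓ' ∈ minorColumns n r k then bottomLeftSubmatrix M k hk ℓ' ℓ' else 1) else 0 := by
  have := ℓ.isLt
  have := ℓ'.isLt
  have hperm := minorPerm_apply_eq_iff hr hk ℓ ℓ'
  simp only [minorColumns, mem_filter, mem_univ, true_and] at hperm ⊢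
  simp only [bottomLeftSubmatrix, Matrix.submatrix_apply]
  by_cases hone : IsOnePosition n r ⟨n - k + ℓ, by omega⟩ (Fin.castLE hk ℓ')
  · rw [hM1 _ _ hone, map_one, if_pos (hperm.2 (Or.inl hone)), if_neg]
    simp only [IsOnePosition, Fin.val_castLE] at hone
    omega
  by_cases hvar : S ⟨n - k + ℓ, by omega⟩ (Fin.castLE hk ℓ')
  · rw [hMX _ _ hvar, MvPolynomial.aeval_X, specializeToMinorDiagonal]
    simp only [Fin.val_castLE, Nat.add_left_cancel_iff, hperm, hone, false_or]
    by_cases hdiag : ℓ = ℓ'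
    · subst hdiag
      simp only [true_and, hMX _ _ hvar]
      split_ifs <;> rfl
    · have : (ℓ : ℕ) ≠ ℓ' := Fin.val_ne_of_ne hdiag
      simp [hdiag, this]
  · rw [hM0 _ _ hvar hone, map_zero, if_neg (hperm.not.2 ?_)]
    rintro (h | ⟨rfl, hC⟩)
    · exact hone h
    · exact hvar ((hS _ _).2 (by simp only [IsVariablePosition, Fin.val_castLE]; omega))

theorem bottomLeftSubmatrix_det_not_mem_pow_succ [IsDomain R] (hr : r ≤ n) (hk : k ≤ n)
    (hS : ∀ i j, S i j ↔ IsVariablePosition n r i j)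
    {M : Matrix (Fin n) (Fin n) (MvPolynomial {p : Fin n × Fin n // S p.1 p.2} R)}
    (hMX : ∀ i j (h : S i j), M i j = .X ⟨(i, j), h⟩)
    (hM1 : ∀ i j, IsOnePosition n r i j → M i j = 1)
    (hM0 : ∀ i j, ¬ S i j → ¬ IsOnePosition n r i j → M i j = 0) :
    (bottomLeftSubmatrix M k hk).det ∉
      MvPolynomial.idealOfVars _ R ^ (minorOrder n r k + 1) := by
  set N := bottomLeftSubmatrix M k hk
  set C := minorColumns n r k
  have hdiag : (∏ ℓ ∈ C, N ℓ ℓ).VanishesToOrder #C := by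
    have hX : ∀ ℓ ∈ C, (N ℓ ℓ).VanishesToOrder 1 := fun ℓ hℓ => by
      simp only [C, minorColumns, mem_filter, mem_univ, true_and] at hℓ
      have hvar : S ⟨n - k + ℓ, by omega⟩ (Fin.castLE hk ℓ) :=
        (hS _ _).2 (by simp only [IsVariablePosition, Fin.val_castLE]; omega)
      simpa only [N, bottomLeftSubmatrix, Matrix.submatrix_apply, hMX _ _ hvar]
        using MvPolynomial.vanishesToOrder_X _
    simpa using MvPolynomial.VanishesToOrder.prod hX
  have hspec : MvPolynomial.aeval (specializeToMinorDiagonal r k) N.det =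
      ((Equiv.Perm.sign (minorPerm hr hk) : ℤ) : MvPolynomial _ R) * ∏ ℓ ∈ C, N ℓ ℓ := by
    rw [AlgHom.map_det, Matrix.det_eq_sign_mul_prod_of_eq_ite ((MvPolynomial.aeval _).mapMatrix N)
      (minorPerm hr hk) _ (aeval_specializeToMinorDiagonal_bottomLeftSubmatrix hr hk hS hMX hM1 hM0),
      Fintype.prod_ite_mem]
  have hspec𝔪 : ∀ v : {p : Fin n × Fin n // S p.1 p.2},
      specializeToMinorDiagonal r k v ∈ MvPolynomial.idealOfVars _ R := by
    intro v
    unfold specializeToMinorDiagonal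
    split_ifs
    exacts [Ideal.subset_span ⟨v, rfl⟩, zero_mem _]
  intro hmem
  have hspec_mem := MvPolynomial.aeval_mem_pow_idealOfVars hspec𝔪 hmem
  have hsign : IsUnit
      ((Equiv.Perm.sign (minorPerm hr hk) : ℤ) : MvPolynomial {p : Fin n × Fin n // S p.1 p.2} R) :=
    (Equiv.Perm.sign _).isUnit.map (Int.castRingHom _)
  rw [hspec, Ideal.unit_mul_mem_iff_mem _ hsign] at hspec_mem
  exact hdiag.2 (card_minorColumns n r k ▸ hspec_mem)

end Specialization

/-- Let `M` be the generic matrix of the affine patch `w₀^P B⁻ B` of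
`SL_n/B` (ones on the two shifted anti-diagonals, independent indeterminates `x_{ij}`
at the positions of `S`, zeros elsewhere), and let `D k` (for `k ≤ n`) be the
bottom-left `k × k` minor of `M`.  Then `Q = ∏_{k=1}^{n-1} D k` is nonzero, lies in
`𝔪^{r(n-r)}`, and does not lie in `𝔪^{r(n-r)+1}`, where `𝔪` is the ideal generated by
the indeterminates.  (Indices `i, j` of `Fin n` correspond to the 1-indexed
`i+1, j+1` of the paper.) -/
theorem product_of_minors_order_of_vanishing
    {K : Type*} [Field K] (n r : ℕ) (hr2 : r ≤ n - 1)
    (S : Fin n → Fin n → Prop)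
    (hS : ∀ i j : Fin n, S i j ↔
      (((i : ℕ) + 1 ≤ r ∧ r + 1 - ((i : ℕ) + 1) < (j : ℕ) + 1 ∧ (j : ℕ) + 1 ≤ r) ∨
       (r < (i : ℕ) + 1 ∧ (j : ℕ) + 1 ≤ r) ∨
       (r < (i : ℕ) + 1 ∧ n + r + 1 - ((i : ℕ) + 1) < (j : ℕ) + 1)))
    (M : Matrix (Fin n) (Fin n) (MvPolynomial {p : Fin n × Fin n // S p.1 p.2} K))
    (hMX : ∀ (i j : Fin n) (h : S i j), M i j = MvPolynomial.X ⟨(i, j), h⟩)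
    (hM1 : ∀ i j : Fin n,
      (((i : ℕ) + 1 ≤ r ∧ (j : ℕ) + 1 = r + 1 - ((i : ℕ) + 1)) ∨
       (r < (i : ℕ) + 1 ∧ (j : ℕ) + 1 = n + r + 1 - ((i : ℕ) + 1))) → M i j = 1)
    (hM0 : ∀ i j : Fin n, ¬ S i j →
      ¬ (((i : ℕ) + 1 ≤ r ∧ (j : ℕ) + 1 = r + 1 - ((i : ℕ) + 1)) ∨
         (r < (i : ℕ) + 1 ∧ (j : ℕ) + 1 = n + r + 1 - ((i : ℕ) + 1))) → M i j = 0)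
    (D : ℕ → MvPolynomial {p : Fin n × Fin n // S p.1 p.2} K)
    (hD : ∀ (k : ℕ) (hk : k ≤ n), D k = (M.submatrix
        (fun i : Fin k => (⟨n - k + (i : ℕ), by have := i.isLt; omega⟩ : Fin n))
        (Fin.castLE hk)).det)
    (Q : MvPolynomial {p : Fin n × Fin n // S p.1 p.2} K)
    (hQ : Q = ∏ k ∈ Finset.Icc 1 (n - 1), D k)
    (𝔪 : Ideal (MvPolynomial {p : Fin n × Fin n // S p.1 p.2} K))
    (h𝔪 : 𝔪 = Ideal.span (Set.range MvPolynomial.X)) :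
    Q ≠ 0 ∧ Q ∈ 𝔪 ^ (r * (n - r)) ∧ Q ∉ 𝔪 ^ (r * (n - r) + 1) := by
  subst h𝔪
  have hr : r ≤ n := by omega
  have hM𝔪 : ∀ i j, ¬ IsOnePosition n r i j → M i j ∈ Ideal.span (Set.range MvPolynomial.X) := by
    intro i j hone
    by_cases hvar : S i j
    · rw [hMX i j hvar]
      exact Ideal.subset_span ⟨_, rfl⟩
    · rw [hM0 i j hvar hone]
      exact zero_mem _
  have hminor : ∀ k ∈ Icc 1 (n - 1), (D k).VanishesToOrder (minorOrder n r k) := by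
    intro k hk
    have hkn : k ≤ n := by rw [mem_Icc] at hk; omega
    rw [hD k hkn]
    exact ⟨bottomLeftSubmatrix_det_mem_pow _ hkn hM𝔪,
      bottomLeftSubmatrix_det_not_mem_pow_succ hr hkn hS hMX hM1 hM0⟩
  have hQord := MvPolynomial.VanishesToOrder.prod hminor
  rw [sum_minorOrder, ← hQ] at hQord
  exact ⟨hQord.ne_zero, hQord.1, hQord.2⟩
end
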